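/- For every k ≥ 1, every subset S ⊆ {1,…,k}, and every x ∈ B_k, one has Σ_{S,k}(Φ_k(x)) = Φ_k(Θ_S(x)). -/

import Mathlib

open MvPolynomial

set_option synthInstance.maxHeartbeats 400000
set_option maxHeartbeats 1000000

noncomputable def relIdeal (p r k : ℕ) [Fact p.Prime] : Ideal (MvPolynomial (Fin k) (GaloisField p r)) :=
  Ideal.span (Set.range fun i : Fin k => X i ^ 2 - X i)

abbrev B (p r k : ℕ) [Fact p.Prime] :=
  MvPolynomial (Fin k) (GaloisField p r) ⧸ relIdeal p r k

noncomputable def v (p r k : ℕ) [Fact p.Prime] (i : Fin k) : B p r k :=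
  Ideal.Quotient.mk _ (X i)

lemma v_idem (p r k : ℕ) [Fact p.Prime] (i : Fin k) : v p r k i ^ 2 = v p r k i := by
  have h : (X i ^ 2 - X i : MvPolynomial (Fin k) (GaloisField p r)) ∈ relIdeal p r k :=
    Ideal.subset_span ⟨i, rfl⟩
  have h2 := (Ideal.Quotient.eq_zero_iff_mem).mpr h
  rw [map_sub, map_pow] at h2
  have h3 := sub_eq_zero.mp h2
  simpa [v] using h3

lemma one_sub_v_idem (p r k : ℕ) [Fact p.Prime] (i : Fin k) :
    (1 - v p r k i) ^ 2 = 1 - v p r k i := by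
  have h : (1 - v p r k i) ^ 2 = 1 - 2 * v p r k i + v p r k i ^ 2 := by ring
  rw [h, v_idem]; ring

noncomputable def ThAux (p r k : ℕ) [Fact p.Prime] (S : Finset (Fin k)) :
    MvPolynomial (Fin k) (GaloisField p r) →+* B p r k :=
  (aeval (fun i : Fin k => if i ∈ S then 1 - v p r k i else v p r k i)).toRingHom

lemma ThAux_cond (p r k : ℕ) [Fact p.Prime] (S : Finset (Fin k)) :
    relIdeal p r k ≤ RingHom.ker (ThAux p r k S) := by
  refine Ideal.span_le.mpr ?_
  rintro _ ⟨i, rfl⟩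
  simp only [SetLike.mem_coe, RingHom.mem_ker, ThAux, AlgHom.toRingHom_eq_coe,
    RingHom.coe_coe, map_sub, map_pow, aeval_X]
  by_cases h : i ∈ S
  · rw [if_pos h, one_sub_v_idem, sub_self]
  · rw [if_neg h, v_idem, sub_self]

/-- The automorphism `Θ_S` of `B_k`, determined by `v_i ↦ 1 - v_i` for `i ∈ S` and
`v_i ↦ v_i` otherwise, fixing `F_{p^r}` pointwise. -/
noncomputable def Th (p r k : ℕ) [Fact p.Prime] (S : Finset (Fin k)) :
    B p r k →+* B p r k :=
  Ideal.Quotient.lift (relIdeal p r k) (ThAux p r k S) (fun _ ha => ThAux_cond p r k S ha)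

noncomputable def LamAux (p r k : ℕ) [Fact p.Prime] (π : Equiv.Perm (Fin k)) (t : ℕ) :
    MvPolynomial (Fin k) (GaloisField p r) →+* B p r k :=
  eval₂Hom ((Ideal.Quotient.mk (relIdeal p r k)).comp
      ((C : GaloisField p r →+* MvPolynomial (Fin k) (GaloisField p r)).comp
        (iterateFrobenius (GaloisField p r) p t)))
    (fun i => v p r k (π i))

lemma LamAux_cond (p r k : ℕ) [Fact p.Prime] (π : Equiv.Perm (Fin k)) (t : ℕ) :
    relIdeal p r k ≤ RingHom.ker (LamAux p r k π t) := by
  refine Ideal.span_le.mpr ?_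
  rintro _ ⟨i, rfl⟩
  simp only [SetLike.mem_coe, RingHom.mem_ker, LamAux, map_sub, map_pow, eval₂Hom_X']
  rw [v_idem, sub_self]

/-- The automorphism `Λ_{π,t}` of `B_k`, acting on `F_{p^r}` as the Frobenius power
`α ↦ α^{p^t}` and sending `v_i ↦ v_{π(i)}`. -/
noncomputable def Lam (p r k : ℕ) [Fact p.Prime] (π : Equiv.Perm (Fin k)) (t : ℕ) :
    B p r k →+* B p r k :=
  Ideal.Quotient.lift (relIdeal p r k) (LamAux p r k π t) (fun _ ha => LamAux_cond p r k π t ha)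

noncomputable def PhiAux (p r k : ℕ) [Fact p.Prime] :
    MvPolynomial (Fin k) (GaloisField p r) →+* (Fin (2 ^ k) → GaloisField p r) :=
  Pi.ringHom fun j =>
    eval₂Hom (RingHom.id (GaloisField p r))
      (fun i : Fin k => if Nat.testBit (j : ℕ) (i : ℕ) then 1 else 0)

lemma PhiAux_cond (p r k : ℕ) [Fact p.Prime] :
    relIdeal p r k ≤ RingHom.ker (PhiAux p r k) := by
  refine Ideal.span_le.mpr ?_
  rintro _ ⟨i, rfl⟩
  simp only [SetLike.mem_coe, RingHom.mem_ker, PhiAux]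
  funext j
  simp only [Pi.ringHom, RingHom.pi_apply, Pi.ringHom_apply, map_sub, map_pow, eval₂Hom_X']
  by_cases h : Nat.testBit (j : ℕ) (i : ℕ) <;> simp [h]

/-- The Gray map `Φ_k : B_k → F_{p^r}^{2^k}`: the coordinate indexed by `j` is the
evaluation of (a representative of) an element of `B_k` at the point whose `i`-th
coordinate is the `i`-th binary digit of `j`.  This agrees with the recursive
definition `Φ_k(α + β v_k) = (Φ_{k-1}(α), Φ_{k-1}(α + β))`, `Φ_0 = id`. -/
noncomputable def Phi (p r k : ℕ) [Fact p.Prime] :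
    B p r k →+* (Fin (2 ^ k) → GaloisField p r) :=
  Ideal.Quotient.lift (relIdeal p r k) (PhiAux p r k) (fun _ ha => PhiAux_cond p r k ha)

lemma sum_two_pow_lt (k : ℕ) (S : Finset (Fin k)) : (∑ i ∈ S, 2 ^ (i : ℕ)) < 2 ^ k := by
  have h1 : (∑ i ∈ S, 2 ^ (i : ℕ)) ≤ ∑ i ∈ (Finset.univ : Finset (Fin k)), 2 ^ (i : ℕ) :=
    Finset.sum_le_sum_of_subset (Finset.subset_univ S)
  have h2 : ∑ i ∈ (Finset.univ : Finset (Fin k)), 2 ^ (i : ℕ) =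
      ∑ i ∈ Finset.range k, 2 ^ i := Fin.sum_univ_eq_sum_range _ _
  have h3 : ∀ n : ℕ, (∑ i ∈ Finset.range n, 2 ^ i) < 2 ^ n := by
    intro n
    induction n with
    | zero => simp
    | succ m ih => rw [Finset.sum_range_succ, pow_succ]; omega
  have h4 := h3 k
  omega

/-- The permutation `Σ_{S,k}` of `{1,…,2^k}` : on 0-based indices it is
`j ↦ j XOR (Σ_{i ∈ S} 2^{i-1})`, i.e. the composition over `i ∈ S` of the permutations
`Σ_{i,k}` which, within each consecutive block of `2^i` coordinates, cyclically shift the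
block by `2^{i-1}` positions (flip the binary digit `i-1`). -/
def SigmaPerm (k : ℕ) (S : Finset (Fin k)) : Equiv.Perm (Fin (2 ^ k)) :=
  Function.Involutive.toPerm
    (fun j => ⟨(j : ℕ) ^^^ ∑ i ∈ S, 2 ^ (i : ℕ),
      Nat.xor_lt_two_pow j.isLt (sum_two_pow_lt k S)⟩)
    (by
      intro j
      apply Fin.ext
      simp [Nat.xor_assoc])

/-! Both sides are ring homomorphisms in `x`, so it suffices to compare them on constants and on
the generators `v_i`.  The `j`-th coordinate of `Φ_k` evaluates at the point formed by the binary
digits of `j`, and `Σ_{S,k}` flips exactly the digits indexed by `S`; on `v_i` this is `v_i ↦ 1 - v_i`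
for `i ∈ S`, i.e. `Θ_S`. -/

section GrayMap

variable {p r k : ℕ} [Fact p.Prime]

lemma testBit_sum_two_pow_fin (S : Finset (Fin k)) (i : Fin k) :
    Nat.testBit (∑ j ∈ S, 2 ^ (j : ℕ)) i = decide (i ∈ S) := by
  have hsum : ∑ j ∈ S, 2 ^ (j : ℕ) = ∑ n ∈ S.map Fin.valEmbedding, 2 ^ n :=
    (Finset.sum_map S Fin.valEmbedding (2 ^ ·)).symm
  rw [hsum, Bool.eq_iff_iff, ← Nat.mem_bitIndices, ← List.mem_toFinset,
    Finset.toFinset_bitIndices_sum_two_pow]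
  simp [Fin.val_inj]

lemma testBit_sigmaPerm (S : Finset (Fin k)) (j : Fin (2 ^ k)) (i : Fin k) :
    Nat.testBit (SigmaPerm k S j) i = (Nat.testBit j i ^^ decide (i ∈ S)) := by
  rw [← testBit_sum_two_pow_fin S i]
  exact Nat.testBit_xor _ _ _

lemma Phi_mk_apply (f : MvPolynomial (Fin k) (GaloisField p r)) (j : Fin (2 ^ k)) :
    Phi p r k (Ideal.Quotient.mk _ f) j =
      eval (fun i : Fin k => if Nat.testBit j i then 1 else 0) f :=
  rfl

lemma Phi_mk_C (a : GaloisField p r) :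
    Phi p r k (Ideal.Quotient.mk _ (C a)) = fun _ => a := by
  funext j
  simp [Phi_mk_apply]

lemma Phi_v (i : Fin k) (j : Fin (2 ^ k)) :
    Phi p r k (v p r k i) j = if Nat.testBit j i then 1 else 0 := by
  simp [v, Phi_mk_apply]

lemma Th_mk_C (S : Finset (Fin k)) (a : GaloisField p r) :
    Th p r k S (Ideal.Quotient.mk _ (C a)) = Ideal.Quotient.mk _ (C a) :=
  (Ideal.Quotient.lift_mk _ _ _).trans (aeval_C _ a)

lemma Th_v (S : Finset (Fin k)) (i : Fin k) :
    Th p r k S (v p r k i) = if i ∈ S then 1 - v p r k i else v p r k i := by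
  simp [Th, ThAux, v]

lemma Phi_Th_v (S : Finset (Fin k)) (i : Fin k) (j : Fin (2 ^ k)) :
    Phi p r k (Th p r k S (v p r k i)) j = Phi p r k (v p r k i) (SigmaPerm k S j) := by
  rw [Th_v, Phi_v, testBit_sigmaPerm]
  by_cases hiS : i ∈ S <;> cases hbit : Nat.testBit j i <;> simp [hiS, hbit, Phi_v]

end GrayMap

theorem stmt_12_general (p r k : ℕ) [Fact p.Prime] (S : Finset (Fin k)) (x : B p r k) :
    (fun j : Fin (2 ^ k) => Phi p r k x (SigmaPerm k S j)) =
      Phi p r k (Th p r k S x) := by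
  let PhiSigma : B p r k →+* (Fin (2 ^ k) → GaloisField p r) :=
    RingHom.pi fun j => (Pi.evalRingHom _ (SigmaPerm k S j)).comp (Phi p r k)
  suffices h : PhiSigma = (Phi p r k).comp (Th p r k S) from RingHom.congr_fun h x
  refine Ideal.Quotient.ringHom_ext (MvPolynomial.ringHom_ext (fun a => ?_) (fun i => ?_))
  · funext j
    simp [PhiSigma, Phi_mk_C, Th_mk_C]
  · funext j
    exact (Phi_Th_v S i j).symm

/-- For every `k ≥ 1`, `S ⊆ {1,…,k}` and `x ∈ B_k`, `Σ_{S,k}(Φ_k(x)) = Φ_k(Θ_S(x))`. -/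
theorem stmt_12 (p r k : ℕ) [Fact p.Prime] (hr : 1 ≤ r) (hk : 1 ≤ k)
    (S : Finset (Fin k)) (x : B p r k) :
    (fun j : Fin (2 ^ k) => Phi p r k x (SigmaPerm k S j)) =
      Phi p r k (Th p r k S x) :=
  stmt_12_general p r k S x
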